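/- For ρ > 0, γ ≥ 0, define E_n := θ(∑_{k=0}^{n−1} 1/(k+ρ) + ∑_{m=1}^∞ (γ^m/m)(1/(ρ)_{\bar m} − 1/((n+ρ)_{\bar m}))) for n ≥ 1 and θ > 0. Then E_2 − E_1 = (θ/(1+ρ))·(1 + ∑_{m=1}^∞ γ^m/((2+ρ)_{\bar m})). -/

import Mathlib

/-- Rising factorial `(a)_{\bar b} = a(a+1)⋯(a+b-1)` for a real `a`. -/
noncomputable def riseFact (a : ℝ) (b : ℕ) : ℝ := ∏ j ∈ Finset.range b, (a + j)

/-- The expected size of the accessory genome of a sample of size `n`. -/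
noncomputable def expectedG (θ ρ γ : ℝ) (n : ℕ) : ℝ :=
  θ * (∑ k ∈ Finset.range n, 1 / ((k : ℝ) + ρ)
    + ∑' m : ℕ, (γ ^ (m + 1) / ((m : ℝ) + 1)) *
        (1 / riseFact ρ (m + 1) - 1 / riseFact ((n : ℝ) + ρ) (m + 1)))

/-!
The defining series of `E_n` telescope in `n`. Writing `(a)_{m+1} = a (a+1)_m` and
`(a+1)_{m+1} = (a+1)_m (a+m+1)` gives
`(1/(m+1)) (1/(a)_{m+1} - 1/(a+1)_{m+1}) = 1/(a (a+1)_{m+1})`,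
so with `a = n + ρ` one gets `E_{n+1} - E_n = θ/(n+ρ) (1 + ∑_{m≥1} γ^m/(n+1+ρ)_m)`.
All series involved are dominated by `∑ |γ|^m/m!`, since `(a)_m ≥ m!` for `a ≥ 1`.
-/

open Nat

section RisingFactorial

variable {a : ℝ}

lemma riseFact_succ_right (a : ℝ) (b : ℕ) : riseFact a (b + 1) = riseFact a b * (a + b) :=
  Finset.prod_range_succ _ _

lemma riseFact_succ_left (a : ℝ) (b : ℕ) : riseFact a (b + 1) = a * riseFact (a + 1) b := by
  rw [riseFact, Finset.prod_range_succ', riseFact, mul_comm]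
  push_cast
  simp only [add_zero, add_assoc, add_comm (1 : ℝ)]

lemma riseFact_pos (ha : 0 < a) (b : ℕ) : 0 < riseFact a b :=
  Finset.prod_pos fun _ _ => by positivity

lemma factorial_le_riseFact (ha : 1 ≤ a) (b : ℕ) : (b ! : ℝ) ≤ riseFact a b := by
  rw [← Finset.prod_range_add_one_eq_factorial, Nat.cast_prod, riseFact]
  gcongr with j
  push_cast
  linarith

lemma summable_pow_succ_div_riseFact (ha : 1 ≤ a) (x : ℝ) :
    Summable fun m : ℕ => x ^ (m + 1) / riseFact a (m + 1) := by
  suffices h : Summable fun m : ℕ => x ^ m / riseFact a m from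
    (summable_nat_add_iff (f := fun m => x ^ m / riseFact a m) 1).mpr h
  refine (Real.summable_pow_div_factorial |x|).of_norm_bounded fun m => ?_
  have hpos : (0 : ℝ) < m ! := by positivity
  rw [norm_div, norm_pow, Real.norm_eq_abs, Real.norm_of_nonneg (riseFact_pos (by linarith) m).le]
  gcongr
  exact factorial_le_riseFact ha m

lemma one_div_succ_mul_sub_riseFact (ha : 0 < a) (m : ℕ) :
    1 / ((m : ℝ) + 1) * (1 / riseFact a (m + 1) - 1 / riseFact (a + 1) (m + 1))
      = 1 / a * (1 / riseFact (a + 1) (m + 1)) := by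
  have hr := riseFact_pos (show 0 < a + 1 by linarith) m
  rw [riseFact_succ_left a, riseFact_succ_right (a + 1)]
  field_simp
  ring

end RisingFactorial

noncomputable def accessoryTerm (ρ γ : ℝ) (n m : ℕ) : ℝ :=
  γ ^ (m + 1) / ((m : ℝ) + 1) * (1 / riseFact ρ (m + 1) - 1 / riseFact ((n : ℝ) + ρ) (m + 1))

section AccessoryGenome

variable {ρ : ℝ} (γ : ℝ)

lemma one_le_natCast_add_one_add (hρ : 0 < ρ) (n : ℕ) : 1 ≤ (n : ℝ) + 1 + ρ := by
  linarith [n.cast_nonneg' (α := ℝ)]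

lemma expectedG_eq (θ : ℝ) (n : ℕ) :
    expectedG θ ρ γ n
      = θ * (∑ k ∈ Finset.range n, 1 / ((k : ℝ) + ρ) + ∑' m, accessoryTerm ρ γ n m) :=
  rfl

lemma accessoryTerm_succ (hρ : 0 < ρ) (n m : ℕ) :
    accessoryTerm ρ γ (n + 1) m
      = accessoryTerm ρ γ n m + 1 / (n + ρ) * (γ ^ (m + 1) / riseFact (n + 1 + ρ) (m + 1)) := by
  have key := one_div_succ_mul_sub_riseFact (show 0 < (n : ℝ) + ρ by positivity) m
  rw [add_right_comm] at key
  simp only [accessoryTerm]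
  push_cast
  linear_combination γ ^ (m + 1) * key

lemma summable_accessoryTerm (hρ : 0 < ρ) (n : ℕ) : Summable (accessoryTerm ρ γ n) := by
  induction n with
  | zero =>
    have h0 : accessoryTerm ρ γ 0 = 0 := funext fun m => by simp [accessoryTerm]
    exact h0 ▸ summable_zero
  | succ n ih =>
    have hg := summable_pow_succ_div_riseFact (one_le_natCast_add_one_add hρ n) γ
    rw [funext (accessoryTerm_succ γ hρ n)]
    exact ih.add (hg.mul_left _)

theorem expectedG_succ_sub (hρ : 0 < ρ) (θ : ℝ) (n : ℕ) :
    expectedG θ ρ γ (n + 1) - expectedG θ ρ γ n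
      = θ / (n + ρ) * (1 + ∑' m : ℕ, γ ^ (m + 1) / riseFact (n + 1 + ρ) (m + 1)) := by
  have hg := summable_pow_succ_div_riseFact (one_le_natCast_add_one_add hρ n) γ
  rw [expectedG_eq, expectedG_eq, tsum_congr (accessoryTerm_succ γ hρ n),
    (summable_accessoryTerm γ hρ n).tsum_add (hg.mul_left _), tsum_mul_left,
    Finset.sum_range_succ]
  ring

end AccessoryGenome

theorem expected_pairwise_differences_general (θ ρ γ : ℝ) (hρ : 0 < ρ) :
    expectedG θ ρ γ 2 - expectedG θ ρ γ 1
      = θ / (1 + ρ) * (1 + ∑' m : ℕ, γ ^ (m + 1) / riseFact (2 + ρ) (m + 1)) := by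
  convert expectedG_succ_sub γ hρ θ 1 using 5 <;> norm_num

/-- `E_2 − E_1 = (θ/(1+ρ))(1 + ∑_{m≥1} γ^m/((2+ρ)_{\bar m}))`: the expected number of
pairwise differences in the infinitely many genes model with HGT. -/
theorem expected_pairwise_differences (θ ρ γ : ℝ) (hθ : 0 < θ) (hρ : 0 < ρ) (hγ : 0 ≤ γ) :
    expectedG θ ρ γ 2 - expectedG θ ρ γ 1
      = θ / (1 + ρ) * (1 + ∑' m : ℕ, γ ^ (m + 1) / riseFact (2 + ρ) (m + 1)) :=
  expected_pairwise_differences_general θ ρ γ hρ
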